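/- arXiv:0801.2089 — 2 statements merged into one kernel-verified Lean document; each statement's English description precedes it below -/
import Mathlib

section
/- Let M, N be positive integers with M ∣ N and set S = N/M. Let Ψ : ℍ[ℚ,−N,1] → ℍ[ℚ,−M,1] be the ℚ-linear map determined by Ψ(1) = 1, Ψ(i) = ((M+N)/(2M))·i′ + ((M−N)/(2M))·k′, Ψ(j) = j′, Ψ(k) = ((M−N)/(2M))·i′ + ((M+N)/(2M))·k′, where i′, j′, k′ are the generators of ℍ[ℚ,−M,1]. Then Ψ maps R(N) into R(M); explicitly Ψ(e₁^N) = e₁^M, Ψ(e₂^N) = e₂^M, Ψ(e₃^N) = e₃^M and Ψ(e₄^N) = (1−S)·e₃^M + S·e₄^M. -/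
open Quaternion

/-- The Eichler order `R(L) = ℤ⟨1, (1+j)/2, (i+k)/2, Lj + k⟩` in `ℍ[ℚ,-L,1]`. -/
def RN (L : ℕ) : Submodule ℤ ℍ[ℚ, -(L : ℚ), 1] :=
  Submodule.span ℤ
    {(1 : ℍ[ℚ, -(L : ℚ), 1]), ⟨1/2, 0, 1/2, 0⟩, ⟨0, 1/2, 0, 1/2⟩, ⟨0, 0, (L : ℚ), 1⟩}

/-- The `ℚ`-linear map `Ψ : ℍ[ℚ,-N,1] → ℍ[ℚ,-M,1]` with `Ψ(1) = 1`,
`Ψ(i) = ((M+N)/(2M))·i′ + ((M−N)/(2M))·k′`, `Ψ(j) = j′`,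
`Ψ(k) = ((M−N)/(2M))·i′ + ((M+N)/(2M))·k′`. -/
def Psi (N M : ℕ) : ℍ[ℚ, -(N : ℚ), 1] → ℍ[ℚ, -(M : ℚ), 1] := fun h =>
  ⟨h.re,
   ((M + N : ℚ) / (2 * M)) * h.imI + ((M - N : ℚ) / (2 * M)) * h.imK,
   h.imJ,
   ((M - N : ℚ) / (2 * M)) * h.imI + ((M + N : ℚ) / (2 * M)) * h.imK⟩

lemma Psi_add (N M : ℕ) (x y : ℍ[ℚ, -(N : ℚ), 1]) :
    Psi N M (x + y) = Psi N M x + Psi N M y := by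
  apply QuaternionAlgebra.ext <;> simp [Psi, QuaternionAlgebra.re_add,
    QuaternionAlgebra.imI_add, QuaternionAlgebra.imJ_add, QuaternionAlgebra.imK_add] <;> ring

lemma Psi_zsmul (N M : ℕ) (z : ℤ) (x : ℍ[ℚ, -(N : ℚ), 1]) :
    Psi N M (z • x) = z • Psi N M x := by
  apply QuaternionAlgebra.ext <;>
    simp [Psi, zsmul_eq_mul, (rfl : ((z • x : ℍ[ℚ, -(N : ℚ), 1]).re) = z • x.re),
      (rfl : ((z • x : ℍ[ℚ, -(N : ℚ), 1]).imI) = z • x.imI),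
      (rfl : ((z • x : ℍ[ℚ, -(N : ℚ), 1]).imJ) = z • x.imJ),
      (rfl : ((z • x : ℍ[ℚ, -(N : ℚ), 1]).imK) = z • x.imK)] <;> ring

/-- If `M ∣ N` (say `N = M·S`), then `Ψ` maps `R(N)` into `R(M)`; explicitly it sends the
Hashimoto basis of `R(N)` to `e₁^M, e₂^M, e₃^M, (1-S)·e₃^M + S·e₄^M`. -/
theorem stmt_4 (N M S : ℕ) (hN : 0 < N) (hM : 0 < M) (hS : N = M * S) :
    (∀ h ∈ RN N, Psi N M h ∈ RN M) ∧
    Psi N M (1 : ℍ[ℚ, -(N : ℚ), 1]) = (1 : ℍ[ℚ, -(M : ℚ), 1]) ∧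
    Psi N M (⟨1/2, 0, 1/2, 0⟩ : ℍ[ℚ, -(N : ℚ), 1]) = (⟨1/2, 0, 1/2, 0⟩ : ℍ[ℚ, -(M : ℚ), 1]) ∧
    Psi N M (⟨0, 1/2, 0, 1/2⟩ : ℍ[ℚ, -(N : ℚ), 1]) = (⟨0, 1/2, 0, 1/2⟩ : ℍ[ℚ, -(M : ℚ), 1]) ∧
    Psi N M (⟨0, 0, (N : ℚ), 1⟩ : ℍ[ℚ, -(N : ℚ), 1]) =
      ((1 : ℤ) - (S : ℤ)) • (⟨0, 1/2, 0, 1/2⟩ : ℍ[ℚ, -(M : ℚ), 1]) +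
        (S : ℤ) • (⟨0, 0, (M : ℚ), 1⟩ : ℍ[ℚ, -(M : ℚ), 1]) := by
  have hM0 : (M : ℚ) ≠ 0 := Nat.cast_ne_zero.mpr hM.ne'
  have h1 : Psi N M (1 : ℍ[ℚ, -(N : ℚ), 1]) = (1 : ℍ[ℚ, -(M : ℚ), 1]) := by
    apply QuaternionAlgebra.ext <;> simp [Psi]
  have h2 : Psi N M (⟨1/2, 0, 1/2, 0⟩ : ℍ[ℚ, -(N : ℚ), 1]) =
      (⟨1/2, 0, 1/2, 0⟩ : ℍ[ℚ, -(M : ℚ), 1]) := by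
    apply QuaternionAlgebra.ext <;> simp [Psi]
  have h3 : Psi N M (⟨0, 1/2, 0, 1/2⟩ : ℍ[ℚ, -(N : ℚ), 1]) =
      (⟨0, 1/2, 0, 1/2⟩ : ℍ[ℚ, -(M : ℚ), 1]) := by
    apply QuaternionAlgebra.ext <;> simp [Psi] <;> field_simp <;> ring
  have h4 : Psi N M (⟨0, 0, (N : ℚ), 1⟩ : ℍ[ℚ, -(N : ℚ), 1]) =
      ((1 : ℤ) - (S : ℤ)) • (⟨0, 1/2, 0, 1/2⟩ : ℍ[ℚ, -(M : ℚ), 1]) +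
        (S : ℤ) • (⟨0, 0, (M : ℚ), 1⟩ : ℍ[ℚ, -(M : ℚ), 1]) := by
    have hNQ : (N : ℚ) = M * S := by exact_mod_cast hS
    apply QuaternionAlgebra.ext <;>
      simp only [Psi, hNQ, QuaternionAlgebra.smul_mk, QuaternionAlgebra.re_add,
        QuaternionAlgebra.imI_add, QuaternionAlgebra.imJ_add, QuaternionAlgebra.imK_add,
        zsmul_eq_mul, Int.cast_sub, Int.cast_one, Int.cast_natCast, push_cast] <;>
      field_simp <;> ring
  refine ⟨?_, h1, h2, h3, h4⟩
  intro h hh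
  refine Submodule.span_induction ?_ ?_ ?_ ?_ hh
  · intro x hx
    have mem : ∀ y ∈ ({(1 : ℍ[ℚ, -(M : ℚ), 1]), ⟨1/2, 0, 1/2, 0⟩, ⟨0, 1/2, 0, 1/2⟩,
        ⟨0, 0, (M : ℚ), 1⟩} : Set ℍ[ℚ, -(M : ℚ), 1]), y ∈ RN M := fun y hy =>
      Submodule.subset_span hy
    rcases hx with rfl | rfl | rfl | rfl
    · rw [h1]; exact mem _ (by simp)
    · rw [h2]; exact mem _ (by simp)
    · rw [h3]; exact mem _ (by simp)
    · rw [h4]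
      exact Submodule.add_mem _ (Submodule.smul_mem _ _ (mem _ (by simp)))
        (Submodule.smul_mem _ _ (mem _ (by simp)))
  · have : Psi N M 0 = 0 := by apply QuaternionAlgebra.ext <;> simp [Psi]
    rw [this]; exact Submodule.zero_mem _
  · intro x y _ _ hx hy
    rw [Psi_add]; exact Submodule.add_mem _ hx hy
  · intro z x _ hx
    rw [Psi_zsmul]; exact Submodule.smul_mem _ _ hx
end

section
/- Let Δ, N be positive integers, p an odd prime with p ∤ ΔN, a ∈ ℤ with p ∣ a²ΔN + 1, and let q be a prime with q ∤ Δp. Let ω ∈ ℤ_q satisfy ω² = p. Then the ℚ_q-linear map φ : ℍ[ℚ_q,−ΔN,p] → M₂(ℚ_q) sending α + β·i + γ·j + δ·k to !![α − γω, β + δω; ΔN·(−β + δω), α + γω] is a ℚ_q-algebra isomorphism, and the ℤ_q-submodule of M₂(ℚ_q) spanned by φ(e₁), φ(e₂), φ(e₃), φ(e₄) equals the set of matrices with all entries in ℤ_q whose lower-left entry lies in N·ℤ_q. -/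
open Quaternion

/-- The `ℚ_q`-linear map `φ : ℍ[ℚ_q, -ΔN, p] → M₂(ℚ_q)` sending `α + βi + γj + δk` to
`!![α − γω, β + δω; ΔN(−β + δω), α + γω]`, where `ω² = p` in `ℤ_q`. -/
noncomputable def phi (q : ℕ) [Fact q.Prime] (Δ N p : ℕ) (ω : ℤ_[q]) :
    ℍ[ℚ_[q], -((Δ : ℚ_[q]) * N), (p : ℚ_[q])] → Matrix (Fin 2) (Fin 2) ℚ_[q] := fun h =>
  !![h.re - h.imJ * (ω : ℚ_[q]), h.imI + h.imK * (ω : ℚ_[q]);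
     (Δ : ℚ_[q]) * N * (-h.imI + h.imK * (ω : ℚ_[q])), h.re + h.imJ * (ω : ℚ_[q])]

theorem two_dvd_aux (q p : ℕ) [Fact q.Prime] (hpodd : Odd p) (ω : ℤ_[q])
    (hω : ω ^ 2 = (p:ℤ_[q])) : (2:ℤ_[q]) ∣ (1 + ω) := by
  by_cases hq2 : q = 2
  · subst hq2
    obtain ⟨k, hk⟩ := hpodd
    have hsq : (2:ℤ_[2]) ∣ (1 + ω)^2 := by
      have : (1 + ω)^2 = 2 * ((k:ℤ_[2]) + 1) + 2 * ω := by
        have : (p : ℤ_[2]) = 2*(k:ℤ_[2])+1 := by exact_mod_cast congrArg (Nat.cast (R := ℤ_[2])) hk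
        ring_nf
        rw [hω, this]; ring
      rw [this]; exact Dvd.dvd.add (Dvd.intro _ rfl) (Dvd.intro _ rfl)
    have h1 : ‖(1+ω)^2‖ < 1 := by
      rw [PadicInt.norm_lt_one_iff_dvd]; exact_mod_cast hsq
    rw [sq, norm_mul, ← sq] at h1
    have h2 : ‖1+ω‖ < 1 := by nlinarith [norm_nonneg (1+ω), PadicInt.norm_le_one (1+ω)]
    rw [PadicInt.norm_lt_one_iff_dvd] at h2
    exact_mod_cast h2
  · have hu : IsUnit (2:ℤ_[q]) := by
      rw [PadicInt.isUnit_iff]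
      have h1 : ‖(2:ℤ_[q])‖ ≤ 1 := PadicInt.norm_le_one _
      have h2 : ¬ ‖((2:ℤ):ℤ_[q])‖ < 1 := by
        rw [PadicInt.norm_int_lt_one_iff_dvd]
        simpa using fun h => hq2 ((Nat.prime_dvd_prime_iff_eq (Fact.out) Nat.prime_two).mp
          (by exact_mod_cast h))
      push_cast at h2
      linarith
    exact hu.dvd

theorem nat_unit_aux (q m : ℕ) [Fact q.Prime] (hm : ¬ q ∣ m) : IsUnit (m:ℤ_[q]) := by
  rw [PadicInt.isUnit_iff]
  have h1 : ‖((m:ℤ):ℤ_[q])‖ ≤ 1 := PadicInt.norm_le_one _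
  have h2 : ¬ ‖((m:ℤ):ℤ_[q])‖ < 1 := by
    rw [PadicInt.norm_int_lt_one_iff_dvd]
    exact_mod_cast hm
  push_cast at h1 h2
  linarith

theorem coe_smul_aux (q : ℕ) [Fact q.Prime] (z : ℤ_[q]) (x : ℚ_[q]) :
    z • x = (z:ℚ_[q]) * x := rfl

/-- The standard local Eichler order of level `N` in `M₂(ℚ_q)`, as a `ℤ_q`-submodule. -/
def eichler (q N : ℕ) [Fact q.Prime] : Submodule ℤ_[q] (Matrix (Fin 2) (Fin 2) ℚ_[q]) where
  carrier := {γ | (∀ i j : Fin 2, ∃ z : ℤ_[q], γ i j = (z : ℚ_[q])) ∧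
        ∃ z : ℤ_[q], γ 1 0 = (N : ℚ_[q]) * (z : ℚ_[q])}
  add_mem' := by
    rintro x y ⟨hx1, zx, hx2⟩ ⟨hy1, zy, hy2⟩
    refine ⟨fun i j => ?_, zx + zy, ?_⟩
    · obtain ⟨zi, hzi⟩ := hx1 i j
      obtain ⟨wi, hwi⟩ := hy1 i j
      exact ⟨zi + wi, by rw [Matrix.add_apply, hzi, hwi]; push_cast; ring⟩
    · rw [Matrix.add_apply, hx2, hy2]; push_cast; ring
  zero_mem' := ⟨fun i j => ⟨0, by simp⟩, 0, by simp⟩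
  smul_mem' := by
    rintro c x ⟨hx1, zx, hx2⟩
    refine ⟨fun i j => ?_, c * zx, ?_⟩
    · obtain ⟨zi, hzi⟩ := hx1 i j
      exact ⟨c * zi, by rw [Matrix.smul_apply, hzi]; push_cast; exact rfl⟩
    · rw [Matrix.smul_apply, hx2]; push_cast; rw [show (c • ((N:ℚ_[q]) * zx)) = (c:ℚ_[q]) * ((N:ℚ_[q]) * zx) from rfl]; ring

theorem mem_eichler (q N : ℕ) [Fact q.Prime] (x : Matrix (Fin 2) (Fin 2) ℚ_[q]) :
    x ∈ eichler q N ↔ ((∀ i j : Fin 2, ∃ z : ℤ_[q], x i j = (z : ℚ_[q])) ∧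
        ∃ z : ℤ_[q], x 1 0 = (N : ℚ_[q]) * (z : ℚ_[q])) := Iff.rfl

set_option maxHeartbeats 2000000 in
/-- At a prime `q ∤ Δp` where `p` has a square root `ω` in `ℤ_q`, the map `φ` is a
`ℚ_q`-algebra isomorphism, and the `ℤ_q`-span of the images of the Hashimoto basis
`e₁, e₂, e₃, e₄` is the standard local Eichler order of level `N` in `M₂(ℚ_q)`. -/
theorem stmt_6 (Δ N : ℕ) (hΔ : 0 < Δ) (hN : 0 < N)
    (p : ℕ) (hp : p.Prime) (hp2 : p ≠ 2) (hpΔN : ¬ p ∣ Δ * N)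
    (a : ℤ) (ha : (p : ℤ) ∣ a ^ 2 * Δ * N + 1)
    (q : ℕ) [Fact q.Prime] (hq : ¬ q ∣ Δ * p)
    (ω : ℤ_[q]) (hω : ω ^ 2 = (p : ℤ_[q])) :
    Function.Bijective (phi q Δ N p ω) ∧
    (∀ g h, phi q Δ N p ω (g * h) = phi q Δ N p ω g * phi q Δ N p ω h) ∧
    (∀ g h, phi q Δ N p ω (g + h) = phi q Δ N p ω g + phi q Δ N p ω h) ∧
    (∀ (c : ℚ_[q]) g, phi q Δ N p ω (c • g) = c • phi q Δ N p ω g) ∧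
    phi q Δ N p ω 1 = 1 ∧
    (Submodule.span ℤ_[q]
        {phi q Δ N p ω 1,
         phi q Δ N p ω ⟨1/2, 0, 1/2, 0⟩,
         phi q Δ N p ω ⟨0, 1/2, 0, 1/2⟩,
         phi q Δ N p ω ⟨0, 0, (a : ℚ_[q]) * Δ * N / p, 1 / (p : ℚ_[q])⟩} :
      Set (Matrix (Fin 2) (Fin 2) ℚ_[q])) =
      {γ | (∀ i j : Fin 2, ∃ z : ℤ_[q], γ i j = (z : ℚ_[q])) ∧
        ∃ z : ℤ_[q], γ 1 0 = (N : ℚ_[q]) * (z : ℚ_[q])} := by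
  have hω' : (ω:ℚ_[q])^2 = (p:ℚ_[q]) := by exact_mod_cast congrArg (PadicInt.Coe.ringHom (p := q)) hω
  have hp0 : (p:ℚ_[q]) ≠ 0 := Nat.cast_ne_zero.mpr hp.ne_zero
  have hω0 : (ω:ℚ_[q]) ≠ 0 := by intro h; rw [h] at hω'; simp at hω'; exact hp0 hω'.symm
  have hd0 : (Δ:ℚ_[q]) * N ≠ 0 :=
    mul_ne_zero (Nat.cast_ne_zero.mpr hΔ.ne') (Nat.cast_ne_zero.mpr hN.ne')
  -- units
  obtain ⟨pu, hpu⟩ := nat_unit_aux q p (fun h => hq (Dvd.dvd.mul_left h Δ))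
  obtain ⟨du, hdu⟩ := nat_unit_aux q Δ (fun h => hq (Dvd.dvd.mul_right h p))
  set pi : ℤ_[q] := ↑pu⁻¹ with hpi_def
  set di : ℤ_[q] := ↑du⁻¹ with hdi_def
  have hpi : (p:ℤ_[q]) * pi = 1 := by rw [← hpu, hpi_def]; exact_mod_cast pu.mul_inv
  have hdi : (Δ:ℤ_[q]) * di = 1 := by rw [← hdu, hdi_def]; exact_mod_cast du.mul_inv
  have hpi' : (p:ℚ_[q]) * (pi:ℚ_[q]) = 1 := by exact_mod_cast congrArg (PadicInt.Coe.ringHom (p := q)) hpi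
  have hdi' : (Δ:ℚ_[q]) * (di:ℚ_[q]) = 1 := by exact_mod_cast congrArg (PadicInt.Coe.ringHom (p := q)) hdi
  obtain ⟨t, ht⟩ : (2:ℤ_[q]) ∣ (1 + ω) := two_dvd_aux q p (hp.odd_of_ne_two hp2) ω hω
  obtain ⟨s, hs⟩ : (2:ℤ_[q]) ∣ (1 - ω) := by
    obtain ⟨t, ht⟩ := two_dvd_aux q p (hp.odd_of_ne_two hp2) ω hω
    exact ⟨t - ω, by rw [mul_sub, ← ht]; ring⟩
  have ht' : (1:ℚ_[q]) + ω = 2 * t := by exact_mod_cast congrArg (PadicInt.Coe.ringHom (p := q)) ht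
  have hs' : (1:ℚ_[q]) - ω = 2 * s := by exact_mod_cast congrArg (PadicInt.Coe.ringHom (p := q)) hs
  have hpinv : (p:ℚ_[q]) * (p:ℚ_[q])⁻¹ = 1 := mul_inv_cancel₀ hp0
  refine ⟨?_, ?_, ?_, ?_, ?_, ?_⟩
  · -- bijective
    rw [Function.bijective_iff_has_inverse]
    refine ⟨fun M => ⟨(M 0 0 + M 1 1)/2, (M 0 1 - M 1 0 / ((Δ:ℚ_[q])*N))/2,
      (M 1 1 - M 0 0)/(2*ω), (M 0 1 + M 1 0 / ((Δ:ℚ_[q])*N))/(2*ω)⟩, ?_, ?_⟩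
    · intro g
      ext <;> simp [phi] <;> field_simp [show (Δ:ℚ_[q]) ≠ 0 from Nat.cast_ne_zero.mpr hΔ.ne', show (N:ℚ_[q]) ≠ 0 from Nat.cast_ne_zero.mpr hN.ne'] <;> ring
    · intro M
      ext i j
      fin_cases i <;> fin_cases j <;> simp [phi] <;> field_simp [show (Δ:ℚ_[q]) ≠ 0 from Nat.cast_ne_zero.mpr hΔ.ne', show (N:ℚ_[q]) ≠ 0 from Nat.cast_ne_zero.mpr hN.ne'] <;> ring
  · -- multiplicative
    intro g h
    ext i j
    fin_cases i <;> fin_cases j <;>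
      simp [phi, Matrix.mul_apply, Fin.sum_univ_two, QuaternionAlgebra.re_mul,
        QuaternionAlgebra.imI_mul, QuaternionAlgebra.imJ_mul, QuaternionAlgebra.imK_mul] <;>
      (simp only [← hω']; ring)
  · -- additive
    intro g h
    ext i j
    fin_cases i <;> fin_cases j <;> simp [phi] <;> ring
  · -- smul
    intro c g
    ext i j
    fin_cases i <;> fin_cases j <;> simp [phi, Matrix.smul_apply, coe_smul_aux] <;> ring
  · -- phi 1 = 1
    ext i j
    fin_cases i <;> fin_cases j <;> simp [phi, Matrix.one_apply]
  · -- span statement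
    suffices h : Submodule.span ℤ_[q]
        {phi q Δ N p ω 1,
         phi q Δ N p ω ⟨1/2, 0, 1/2, 0⟩,
         phi q Δ N p ω ⟨0, 1/2, 0, 1/2⟩,
         phi q Δ N p ω ⟨0, 0, (a : ℚ_[q]) * Δ * N / p, 1 / (p : ℚ_[q])⟩} = eichler q N by
      rw [h]; rfl
    apply le_antisymm
    · rw [Submodule.span_le]
      rintro x hx
      simp only [Set.mem_insert_iff, Set.mem_singleton_iff] at hx
      rcases hx with rfl | rfl | rfl | rfl <;> rw [SetLike.mem_coe, mem_eichler]
      · refine ⟨fun i j => ?_, 0, ?_⟩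
        · fin_cases i <;> fin_cases j
          · exact ⟨1, by simp [phi]⟩
          · exact ⟨0, by simp [phi]⟩
          · exact ⟨0, by simp [phi]⟩
          · exact ⟨1, by simp [phi]⟩
        · simp [phi]
      · refine ⟨fun i j => ?_, 0, ?_⟩
        · fin_cases i <;> fin_cases j
          · exact ⟨s, by simp [phi]; linear_combination hs'/2⟩
          · exact ⟨0, by simp [phi]⟩
          · exact ⟨0, by simp [phi]⟩
          · exact ⟨t, by simp [phi]; linear_combination ht'/2⟩
        · simp [phi]
      · refine ⟨fun i j => ?_, -((Δ:ℤ_[q])*s), ?_⟩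
        · fin_cases i <;> fin_cases j
          · exact ⟨0, by simp [phi]⟩
          · exact ⟨t, by simp [phi]; linear_combination ht'/2⟩
          · exact ⟨-((Δ:ℤ_[q])*N*s), by simp [phi]; push_cast
                                        linear_combination (-(Δ:ℚ_[q])*N/2) * hs'⟩
          · exact ⟨0, by simp [phi]⟩
        · simp [phi]; push_cast; linear_combination (-(Δ:ℚ_[q])*N/2) * hs'
      · refine ⟨fun i j => ?_, (Δ:ℤ_[q])*ω*pi, ?_⟩
        · fin_cases i <;> fin_cases j
          · exact ⟨-((a:ℤ_[q])*Δ*N*ω*pi), by simp [phi]; push_cast; field_simp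
                                             linear_combination (-(a:ℚ_[q])*Δ*N)*hpi'⟩
          · exact ⟨ω*pi, by simp [phi]; push_cast; field_simp
                            linear_combination (-1:ℚ_[q])*hpi'⟩
          · exact ⟨(Δ:ℤ_[q])*N*ω*pi, by simp [phi]; push_cast; field_simp
                                        linear_combination (-(Δ:ℚ_[q])*N)*hpi'⟩
          · exact ⟨(a:ℤ_[q])*Δ*N*ω*pi, by simp [phi]; push_cast; field_simp
                                          linear_combination (-(a:ℚ_[q])*Δ*N)*hpi'⟩
        · simp [phi]; push_cast; field_simp; linear_combination (-(Δ:ℚ_[q])*N)*hpi'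
    · -- eichler ≤ span
      set M := Submodule.span ℤ_[q]
        {phi q Δ N p ω 1,
         phi q Δ N p ω ⟨1/2, 0, 1/2, 0⟩,
         phi q Δ N p ω ⟨0, 1/2, 0, 1/2⟩,
         phi q Δ N p ω ⟨0, 0, (a : ℚ_[q]) * Δ * N / p, 1 / (p : ℚ_[q])⟩} with hM
      have hG1 : phi q Δ N p ω 1 ∈ M := Submodule.subset_span (by simp)
      have hG2 : phi q Δ N p ω ⟨1/2, 0, 1/2, 0⟩ ∈ M := Submodule.subset_span (by simp)
      have hG3 : phi q Δ N p ω ⟨0, 1/2, 0, 1/2⟩ ∈ M := Submodule.subset_span (by simp)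
      have hG4 : phi q Δ N p ω ⟨0, 0, (a : ℚ_[q]) * Δ * N / p, 1 / (p : ℚ_[q])⟩ ∈ M :=
        Submodule.subset_span (by simp)
      have hE22 : !![(0:ℚ_[q]),0;0,1] ∈ M := by
        have hrep : !![(0:ℚ_[q]),0;0,1] =
            (ω*pi) • (phi q Δ N p ω ⟨1/2, 0, 1/2, 0⟩ - s • phi q Δ N p ω 1) := by
          ext i j
          fin_cases i <;> fin_cases j <;>
            simp [phi, Matrix.smul_apply, coe_smul_aux] <;> push_cast
          · right; linear_combination hs'/2
          · linear_combination (-(ω:ℚ_[q])*(pi:ℚ_[q])/2)*hs' - (pi:ℚ_[q])*hω' - hpi'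
        rw [hrep]
        exact Submodule.smul_mem _ _ (Submodule.sub_mem _ hG2 (Submodule.smul_mem _ _ hG1))
      have hE11 : !![(1:ℚ_[q]),0;0,0] ∈ M := by
        have hrep : !![(1:ℚ_[q]),0;0,0] = phi q Δ N p ω 1 - !![(0:ℚ_[q]),0;0,1] := by
          ext i j
          fin_cases i <;> fin_cases j <;> simp [phi]
        rw [hrep]
        exact Submodule.sub_mem _ hG1 hE22
      have hD : !![(0:ℚ_[q]),1;(Δ:ℚ_[q])*N,0] ∈ M := by
        have hrep : !![(0:ℚ_[q]),1;(Δ:ℚ_[q])*N,0] =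
            ω • phi q Δ N p ω ⟨0, 0, (a : ℚ_[q]) * Δ * N / p, 1 / (p : ℚ_[q])⟩
              + ((a:ℤ_[q])*Δ*N) • !![(1:ℚ_[q]),0;0,0] - ((a:ℤ_[q])*Δ*N) • !![(0:ℚ_[q]),0;0,1] := by
          ext i j
          fin_cases i <;> fin_cases j <;>
            simp [phi, Matrix.smul_apply, coe_smul_aux] <;> push_cast
          · linear_combination ((a:ℚ_[q])*Δ*N/p) * hω' + ((a:ℚ_[q])*Δ*N) * hpinv
          · linear_combination (-(1:ℚ_[q])/p) * hω' - hpinv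
          · linear_combination (-(Δ:ℚ_[q])*N/p) * hω' - ((Δ:ℚ_[q])*N) * hpinv
          · linear_combination (-(a:ℚ_[q])*Δ*N/p) * hω' - ((a:ℚ_[q])*Δ*N) * hpinv
        rw [hrep]
        exact Submodule.sub_mem _ (Submodule.add_mem _ (Submodule.smul_mem _ _ hG4)
          (Submodule.smul_mem _ _ hE11)) (Submodule.smul_mem _ _ hE22)
      have hF : !![(0:ℚ_[q]),0;(Δ:ℚ_[q])*N,0] ∈ M := by
        have hrep : !![(0:ℚ_[q]),0;(Δ:ℚ_[q])*N,0] =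
            t • !![(0:ℚ_[q]),1;(Δ:ℚ_[q])*N,0] - phi q Δ N p ω ⟨0, 1/2, 0, 1/2⟩ := by
          ext i j
          fin_cases i <;> fin_cases j <;>
            simp [phi, Matrix.smul_apply, coe_smul_aux] <;> push_cast
          · linear_combination ht'/2
          · linear_combination ((Δ:ℚ_[q])*N/2) * ht'
        rw [hrep]
        exact Submodule.sub_mem _ (Submodule.smul_mem _ _ hD) hG3
      have hNE21 : !![(0:ℚ_[q]),0;(N:ℚ_[q]),0] ∈ M := by
        have hrep : !![(0:ℚ_[q]),0;(N:ℚ_[q]),0] = di • !![(0:ℚ_[q]),0;(Δ:ℚ_[q])*N,0] := by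
          ext i j
          fin_cases i <;> fin_cases j <;>
            simp [phi, Matrix.smul_apply, coe_smul_aux] <;> push_cast
          linear_combination (-(N:ℚ_[q]))*hdi'
        rw [hrep]
        exact Submodule.smul_mem _ _ hF
      have hE12 : !![(0:ℚ_[q]),1;0,0] ∈ M := by
        have hrep : !![(0:ℚ_[q]),1;0,0] =
            !![(0:ℚ_[q]),1;(Δ:ℚ_[q])*N,0] - !![(0:ℚ_[q]),0;(Δ:ℚ_[q])*N,0] := by
          ext i j
          fin_cases i <;> fin_cases j <;> simp
        rw [hrep]
        exact Submodule.sub_mem _ hD hF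
      intro γ hγ
      rw [mem_eichler] at hγ
      obtain ⟨h1, zz, h2⟩ := hγ
      obtain ⟨x, hx⟩ := h1 0 0
      obtain ⟨y, hy⟩ := h1 0 1
      obtain ⟨w, hw⟩ := h1 1 1
      have hrep : γ = x • !![(1:ℚ_[q]),0;0,0] + y • !![(0:ℚ_[q]),1;0,0]
          + zz • !![(0:ℚ_[q]),0;(N:ℚ_[q]),0] + w • !![(0:ℚ_[q]),0;0,1] := by
        ext i j
        fin_cases i <;> fin_cases j <;>
          simp [Matrix.smul_apply, coe_smul_aux, hx, hy, hw, h2] <;> push_cast <;> ring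
      rw [hrep]
      exact Submodule.add_mem _ (Submodule.add_mem _ (Submodule.add_mem _
        (Submodule.smul_mem _ _ hE11) (Submodule.smul_mem _ _ hE12))
        (Submodule.smul_mem _ _ hNE21)) (Submodule.smul_mem _ _ hE22)
end
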